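/- If a graph H is the disjoint union of two complete graphs each on at least two vertices, then H is 4-supercritical: γₜ(H) = 4 and for every missing edge e of H, γₜ(H + e) = 2. -/

import Mathlib

/-! If `S` is total dominating, every vertex `v` has a neighbour `x ∈ S`, which in turn has a
neighbour `y ∈ S`; then `x ≠ y` and both lie in the component of `v`. So a total dominating set has
at least two vertices, and in the union of the cliques on `A` and `Aᶜ` at least two on each side,
while two on each side suffice. Once an edge `ab` joins the cliques, `{a, b}` is total dominating. -/

/-- The total domination number of a graph, as an extended natural number
(`⊤` when no total dominating set exists). -/
noncomputable def gammaT {V : Type*} (G : SimpleGraph V) : ℕ∞ :=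
  sInf {n : ℕ∞ | ∃ S : Finset V, (S.card : ℕ∞) = n ∧ ∀ v : V, ∃ u ∈ S, G.Adj v u}

open Finset SimpleGraph

section

variable {V : Type*} {G : SimpleGraph V}

def IsTotalDominating (G : SimpleGraph V) (S : Finset V) : Prop :=
  ∀ v, ∃ u ∈ S, G.Adj v u

namespace IsTotalDominating

variable {S : Finset V}

theorem exists_adj_adj (hS : IsTotalDominating G S) (v : V) :
    ∃ x ∈ S, ∃ y ∈ S, G.Adj v x ∧ G.Adj x y := by
  obtain ⟨x, hxS, hvx⟩ := hS v
  obtain ⟨y, hyS, hxy⟩ := hS x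
  exact ⟨x, hxS, y, hyS, hvx, hxy⟩

theorem two_le_card_filter_mem (hS : IsTotalDominating G S) {C : Set V} [DecidablePred (· ∈ C)]
    (hC : ∀ u v, G.Adj u v → u ∈ C → v ∈ C) {v : V} (hv : v ∈ C) :
    2 ≤ #(S.filter (· ∈ C)) := by
  classical
  obtain ⟨x, hxS, y, hyS, hvx, hxy⟩ := hS.exists_adj_adj v
  have hxC : x ∈ C := hC v x hvx hv
  have hyC : y ∈ C := hC x y hxy hxC
  calc 2 = #{x, y} := (card_pair hxy.ne).symm
    _ ≤ #(S.filter (· ∈ C)) := card_le_card <| by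
      simp [insert_subset_iff, hxS, hyS, hxC, hyC]

theorem two_le_card [Nonempty V] (hS : IsTotalDominating G S) : 2 ≤ #S := by
  classical
  obtain ⟨x, hxS, y, hyS, -, hxy⟩ := hS.exists_adj_adj (Classical.arbitrary V)
  calc 2 = #{x, y} := (card_pair hxy.ne).symm
    _ ≤ #S := card_le_card <| by simp [insert_subset_iff, hxS, hyS]

end IsTotalDominating

theorem gammaT_le_card {S : Finset V} (hS : IsTotalDominating G S) : gammaT G ≤ #S :=
  sInf_le ⟨S, rfl, hS⟩

theorem le_gammaT {n : ℕ} (h : ∀ S : Finset V, IsTotalDominating G S → n ≤ #S) :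
    (n : ℕ∞) ≤ gammaT G := by
  refine le_sInf ?_
  rintro _ ⟨S, rfl, hS⟩
  exact_mod_cast h S hS

theorem two_le_gammaT [Nonempty V] (G : SimpleGraph V) : 2 ≤ gammaT G :=
  le_gammaT fun _ hS ↦ hS.two_le_card

section TwoCliques

variable {H : SimpleGraph V} {A : Set V}

theorem adj_iff_compl (hadj : ∀ u v, H.Adj u v ↔ u ≠ v ∧ (u ∈ A ↔ v ∈ A)) (u v : V) :
    H.Adj u v ↔ u ≠ v ∧ (u ∈ Aᶜ ↔ v ∈ Aᶜ) := by
  simp only [hadj, Set.mem_compl_iff, not_iff_not]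

variable (hadj : ∀ u v, H.Adj u v ↔ u ≠ v ∧ (u ∈ A ↔ v ∈ A))
include hadj

theorem four_le_card_of_isTotalDominating {a b : V} (ha : a ∈ A) (hb : b ∉ A) {S : Finset V}
    (hS : IsTotalDominating H S) : 4 ≤ #S := by
  classical
  have hA := hS.two_le_card_filter_mem (C := A) (fun u v huv ↦ ((hadj u v).1 huv).2.1) ha
  have hAc := hS.two_le_card_filter_mem (C := Aᶜ)
    (fun u v huv ↦ mt ((hadj u v).1 huv).2.2) hb
  have := card_filter_add_card_filter_not (s := S) (· ∈ A)
  simp only [Set.mem_compl_iff] at hAc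
  omega

theorem isTotalDominating_two_per_side [DecidableEq V] {a₁ a₂ b₁ b₂ : V} (ha₁ : a₁ ∈ A)
    (ha₂ : a₂ ∈ A) (ha : a₁ ≠ a₂) (hb₁ : b₁ ∉ A) (hb₂ : b₂ ∉ A) (hb : b₁ ≠ b₂) :
    IsTotalDominating H {a₁, a₂, b₁, b₂} := by
  intro v
  by_cases hv : v ∈ A
  · obtain rfl | hva₁ := eq_or_ne v a₁
    · exact ⟨a₂, by simp, (hadj v a₂).2 ⟨ha, iff_of_true hv ha₂⟩⟩
    · exact ⟨a₁, by simp, (hadj v a₁).2 ⟨hva₁, iff_of_true hv ha₁⟩⟩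
  · obtain rfl | hvb₁ := eq_or_ne v b₁
    · exact ⟨b₂, by simp, (hadj v b₂).2 ⟨hb, iff_of_false hv hb₂⟩⟩
    · exact ⟨b₁, by simp, (hadj v b₁).2 ⟨hvb₁, iff_of_false hv hb₁⟩⟩

theorem gammaT_eq_four (hA : A.Nontrivial) (hAc : Aᶜ.Nontrivial) : gammaT H = 4 := by
  classical
  obtain ⟨a₁, ha₁, a₂, ha₂, ha⟩ := hA
  obtain ⟨b₁, hb₁, b₂, hb₂, hb⟩ := hAc
  have hS := isTotalDominating_two_per_side hadj ha₁ ha₂ ha hb₁ hb₂ hb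
  refine le_antisymm ((gammaT_le_card hS).trans ?_) (le_gammaT fun S hS ↦
    four_le_card_of_isTotalDominating hadj ha₁ hb₁ hS)
  exact_mod_cast card_le_four

theorem isTotalDominating_sup_edge [DecidableEq V] {a b : V} (ha : a ∈ A) (hb : b ∉ A) :
    IsTotalDominating (H ⊔ fromEdgeSet {s(a, b)}) {a, b} := by
  have hab : a ≠ b := by rintro rfl; exact hb ha
  have hedge : (H ⊔ fromEdgeSet {s(a, b)}).Adj a b := Or.inr ⟨rfl, hab⟩
  intro v
  by_cases hv : v ∈ A
  · obtain rfl | hva := eq_or_ne v a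
    · exact ⟨b, by simp, hedge⟩
    · exact ⟨a, by simp, Or.inl ((hadj v a).2 ⟨hva, iff_of_true hv ha⟩)⟩
  · obtain rfl | hvb := eq_or_ne v b
    · exact ⟨a, by simp, hedge.symm⟩
    · exact ⟨b, by simp, Or.inl ((hadj v b).2 ⟨hvb, iff_of_false hv hb⟩)⟩

theorem gammaT_sup_edge_eq_two_of_mem_of_notMem {a b : V} (ha : a ∈ A) (hb : b ∉ A) :
    gammaT (H ⊔ fromEdgeSet {s(a, b)}) = 2 := by
  classical
  have : Nonempty V := ⟨a⟩
  have hab : a ≠ b := by rintro rfl; exact hb ha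
  refine le_antisymm ?_ (two_le_gammaT _)
  simpa [card_pair hab] using gammaT_le_card (isTotalDominating_sup_edge hadj ha hb)

theorem gammaT_sup_edge_eq_two {u v : V} (huv : ¬(u ∈ A ↔ v ∈ A)) :
    gammaT (H ⊔ fromEdgeSet {s(u, v)}) = 2 := by
  by_cases hu : u ∈ A
  · exact gammaT_sup_edge_eq_two_of_mem_of_notMem hadj hu fun hv ↦ huv (iff_of_true hu hv)
  · exact gammaT_sup_edge_eq_two_of_mem_of_notMem (adj_iff_compl hadj) hu
      fun hv ↦ huv (iff_of_false hu (by simpa using hv))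

end TwoCliques

end

theorem stmt3_general {V : Type*} (H : SimpleGraph V)
    (A B : Set V)
    (hpart : ∀ v : V, (v ∈ A ∧ v ∉ B) ∨ (v ∈ B ∧ v ∉ A))
    (hA : 2 ≤ A.ncard) (hB : 2 ≤ B.ncard)
    (hadj : ∀ u v : V, H.Adj u v ↔ u ≠ v ∧ ((u ∈ A ∧ v ∈ A) ∨ (u ∈ B ∧ v ∈ B))) :
    gammaT H = 4 ∧
      ∀ u v : V, u ≠ v → ¬ H.Adj u v →
        gammaT (H ⊔ SimpleGraph.fromEdgeSet {s(u, v)}) = 2 := by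
  obtain rfl : B = Aᶜ := Set.ext fun v ↦ by rcases hpart v with h | h <;> simp [h]
  have hadj' : ∀ u v, H.Adj u v ↔ u ≠ v ∧ (u ∈ A ↔ v ∈ A) := by
    simpa only [Set.mem_compl_iff, ← iff_iff_and_or_not_and_not] using hadj
  refine ⟨gammaT_eq_four hadj' (Set.one_lt_ncard_iff_nontrivial_and_finite.1 hA).1
    (Set.one_lt_ncard_iff_nontrivial_and_finite.1 hB).1, fun u v huv hnadj ↦
    gammaT_sup_edge_eq_two hadj' fun h ↦ hnadj ((hadj' u v).2 ⟨huv, h⟩)⟩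

/-- The disjoint union of two complete graphs, each on at least
two vertices, is 4-supercritical. -/
theorem stmt3 {V : Type*} [Fintype V] [DecidableEq V] (H : SimpleGraph V)
    (A B : Set V)
    (hpart : ∀ v : V, (v ∈ A ∧ v ∉ B) ∨ (v ∈ B ∧ v ∉ A))
    (hA : 2 ≤ A.ncard) (hB : 2 ≤ B.ncard)
    (hadj : ∀ u v : V, H.Adj u v ↔ u ≠ v ∧ ((u ∈ A ∧ v ∈ A) ∨ (u ∈ B ∧ v ∈ B))) :
    gammaT H = 4 ∧
      ∀ u v : V, u ≠ v → ¬ H.Adj u v →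
        gammaT (H ⊔ SimpleGraph.fromEdgeSet {s(u, v)}) = 2 :=
  stmt3_general H A B hpart hA hB hadj
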